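/- arXiv:math/0501477 — 3 statements merged into one kernel-verified Lean document; each statement's English description precedes it below -/
import Mathlib

section
/- For any way of colouring the set of l-element subsets of an infinite countable set T with n colours, there exists an infinite subset U of T all of whose l-element subsets have the same colour. -/
open Classical in
/-- Infinite Ramsey theorem on `ℕ`, relative to an arbitrary infinite set `A`,
with a total colouring. -/
lemma infinite_ramsey_nat (n : ℕ) :
    ∀ l : ℕ, ∀ A : Set ℕ, A.Infinite → ∀ c : Finset ℕ → Fin n,
      ∃ U : Set ℕ, U ⊆ A ∧ U.Infinite ∧ ∃ k : Fin n,
        ∀ s : Finset ℕ, s.card = l → ↑s ⊆ U → c s = k := by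
  intro l
  induction l with
  | zero =>
    intro A hA c
    refine ⟨A, subset_rfl, hA, c ∅, fun s hs _ => ?_⟩
    rw [Finset.card_eq_zero] at hs
    rw [hs]
  | succ l IH =>
    intro A hA c
    -- one step of the construction
    have step : ∀ B : Set ℕ, B.Infinite →
        ∃ a : ℕ, ∃ k : Fin n, ∃ S : Set ℕ, a ∈ B ∧ S ⊆ B ∧ (∀ x ∈ S, a < x) ∧
          S.Infinite ∧ ∀ s : Finset ℕ, s.card = l → ↑s ⊆ S → c (insert a s) = k := by
      intro B hB
      obtain ⟨a, ha⟩ := hB.nonempty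
      have hB' : (B \ Set.Iic a).Infinite := hB.diff (Set.finite_Iic a)
      obtain ⟨U, hUsub, hUinf, k, hk⟩ := IH (B \ Set.Iic a) hB' (fun s => c (insert a s))
      refine ⟨a, k, U, ha, fun x hx => (hUsub hx).1, fun x hx => ?_, hUinf, hk⟩
      have := (hUsub hx).2
      simpa using this
    choose astep kstep Sstep hmem hsub hlt hinf hhom using step
    -- the chain of infinite sets
    let F : {B : Set ℕ // B.Infinite} → {B : Set ℕ // B.Infinite} :=
      fun B => ⟨Sstep B.1 B.2, hinf B.1 B.2⟩
    let chain : ℕ → {B : Set ℕ // B.Infinite} := fun i => F^[i] ⟨A, hA⟩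
    have chain_succ : ∀ i, chain (i + 1) = F (chain i) := by
      intro i
      simp only [chain, Function.iterate_succ_apply']
    let a : ℕ → ℕ := fun i => astep (chain i).1 (chain i).2
    let k : ℕ → Fin n := fun i => kstep (chain i).1 (chain i).2
    have ha_mem : ∀ i, a i ∈ (chain i).1 := fun i => hmem _ _
    have hchain_sub : ∀ i, (chain (i + 1)).1 ⊆ (chain i).1 := by
      intro i
      rw [chain_succ i]
      exact hsub _ _
    have hchain_mono : ∀ i j, i ≤ j → (chain j).1 ⊆ (chain i).1 := by
      intro i j hij
      induction j with
      | zero => simp_all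
      | succ j ihj =>
        rcases Nat.lt_or_ge i (j + 1) with h | h
        · exact fun x hx => ihj (Nat.lt_succ_iff.mp h) (hchain_sub j hx)
        · have : i = j + 1 := le_antisymm hij h
          rw [this]
    have hlt' : ∀ i, ∀ x ∈ (chain (i + 1)).1, a i < x := by
      intro i x hx
      rw [chain_succ i] at hx
      exact hlt _ _ x hx
    have ha_mem' : ∀ i j, i < j → a j ∈ (chain (i + 1)).1 :=
      fun i j hij => hchain_mono (i + 1) j hij (ha_mem j)
    have hamono : StrictMono a := strictMono_nat_of_lt_succ ?_
    swap
    · intro i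
      exact hlt' i (a (i + 1)) (ha_mem' i (i + 1) (Nat.lt_succ_self i))
    have hhom' : ∀ i, ∀ s : Finset ℕ, s.card = l → ↑s ⊆ (chain (i + 1)).1 →
        c (insert (a i) s) = k i := by
      intro i s hs hsub'
      rw [chain_succ i] at hsub'
      exact hhom _ _ s hs hsub'
    -- pigeonhole on the colours
    obtain ⟨k0, hk0⟩ := Finite.exists_infinite_fiber k
    have hI : (k ⁻¹' {k0}).Infinite := Set.infinite_coe_iff.mp hk0
    refine ⟨a '' (k ⁻¹' {k0}), ?_, hI.image (hamono.injective.injOn), k0, ?_⟩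
    · rintro x ⟨i, _, rfl⟩
      have : (chain i).1 ⊆ A := by
        have := hchain_mono 0 i (Nat.zero_le i)
        simpa [chain] using this
      exact this (ha_mem i)
    · intro s hs hsU
      obtain ⟨J, hJsub, rfl⟩ := Finset.subset_set_image_iff.mp hsU
      have hJcard : J.card = l + 1 := by
        rwa [Finset.card_image_of_injective _ hamono.injective] at hs
      have hJne : J.Nonempty := Finset.card_pos.mp (by omega)
      set i := J.min' hJne with hi
      have hik : k i = k0 := hJsub (J.min'_mem hJne)
      have herase : ∀ j ∈ J.erase i, i < j := by
        intro j hj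
        exact lt_of_le_of_ne (J.min'_le j (Finset.mem_of_mem_erase hj))
          (Ne.symm (Finset.ne_of_mem_erase hj))
      have himg : J.image a = insert (a i) ((J.erase i).image a) := by
        conv_lhs => rw [← Finset.insert_erase (J.min'_mem hJne)]
        rw [Finset.image_insert]
      rw [himg, ← hik]
      apply hhom'
      · rw [Finset.card_image_of_injective _ hamono.injective,
          Finset.card_erase_of_mem (J.min'_mem hJne), hJcard]
        omega
      · intro x hx
        simp only [Finset.coe_image, Set.mem_image, Finset.mem_coe] at hx
        obtain ⟨j, hj, rfl⟩ := hx
        exact ha_mem' i j (herase j hj)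

/-- **Infinite Ramsey theorem.** For positive integers `n` and `l`, a countably
infinite set `T`, and any colouring of the `l`-element subsets of `T` with `n`
colours, there is an infinite subset `U ⊆ T` all of whose `l`-element subsets
have the same colour. -/
theorem infinite_ramsey {T : Type*} [Countable T] [Infinite T]
    (n l : ℕ) (hn : 0 < n) (hl : 0 < l)
    (c : ∀ s : Finset T, s.card = l → Fin n) :
    ∃ U : Set T, U.Infinite ∧ ∃ k : Fin n,
      ∀ (s : Finset T) (hs : s.card = l), ↑s ⊆ U → c s hs = k := by
  classical
  obtain ⟨_⟩ := nonempty_denumerable T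
  let e : T ≃ ℕ := Denumerable.eqv T
  let c' : Finset ℕ → Fin n := fun s =>
    if h : (s.image e.symm).card = l then c (s.image e.symm) h else ⟨0, hn⟩
  obtain ⟨U', _, hU'inf, k, hk⟩ :=
    infinite_ramsey_nat n l Set.univ Set.infinite_univ c'
  refine ⟨e.symm '' U', hU'inf.image (e.symm.injective.injOn), k, ?_⟩
  intro s hs hsU
  have hcard : (s.image e).card = l := by
    rwa [Finset.card_image_of_injective _ e.injective]
  have hsub : ↑(s.image e) ⊆ U' := by
    intro x hx
    simp only [Finset.coe_image, Set.mem_image, Finset.mem_coe] at hx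
    obtain ⟨t, ht, rfl⟩ := hx
    obtain ⟨y, hy, hye⟩ := hsU ht
    rwa [← hye, Equiv.apply_symm_apply]
  have hback : (s.image e).image e.symm = s := by
    rw [Finset.image_image]
    simp
  have hkey := hk (s.image e) hcard hsub
  simp only [c', hback] at hkey
  rwa [dif_pos hs] at hkey
end

section
/- For given positive integers d and l and a nonnegative integer k, there exists a positive integer M = M(d,k,l) such that for any sequence A_1, A_2, ..., A_M of d-tuples of nonnegative integers with |A_i| = k + i for each i, there exist indices 1 ≤ i_1 < i_2 < ... < i_l ≤ M with A_{i_1} ≼ A_{i_2} ≼ ... ≼ A_{i_l} (componentwise). -/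
/-!
By Dickson's lemma `ℕ^d` is well-quasi-ordered, so every infinite sequence in it contains
chains of every length. If for some `l` no `M` worked, there would be chain-free admissible
sequences of every length; as there are only finitely many tuples of a given size, Kőnig's
lemma glues them into one infinite admissible sequence all of whose prefixes are chain-free,
a contradiction.
-/

section

variable {α : Type*}

def HasChain [Preorder α] {M : ℕ} (l : ℕ) (A : Fin M → α) : Prop :=
  ∃ g : Fin l → Fin M, StrictMono g ∧ Monotone (A ∘ g)

theorem HasChain.of_castLE [Preorder α] {l m n : ℕ} (h : m ≤ n) {A : Fin n → α}
    (hA : HasChain l (A ∘ Fin.castLE h)) : HasChain l A :=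
  let ⟨g, hg, hmono⟩ := hA
  ⟨Fin.castLE h ∘ g, (Fin.strictMono_castLE h).comp hg, hmono⟩

theorem exists_hasChain_of_wellQuasiOrderedLE [Preorder α] [WellQuasiOrderedLE α]
    (F : ℕ → α) (l : ℕ) : ∃ N, HasChain l fun i : Fin N => F i := by
  obtain ⟨g, hg⟩ := wellQuasiOrdered_le.exists_monotone_subseq F
  exact ⟨g l, fun a => ⟨g a, g.strictMono a.isLt⟩, fun a b hab => g.strictMono hab,
    fun a b hab => hg a b hab⟩

theorem exists_seq_forall_prefix_of_forall_exists {S : ℕ → Set α}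
    (hS : ∀ i, (S i).Finite) (P : ∀ {n : ℕ}, (Fin n → α) → Prop)
    (hP : ∀ {m n : ℕ} (h : m ≤ n) (A : Fin n → α), P A → P (A ∘ Fin.castLE h))
    (hex : ∀ n, ∃ A : Fin n → α, (∀ i : Fin n, A i ∈ S i) ∧ P A) :
    ∃ F : ℕ → α, (∀ i, F i ∈ S i) ∧ ∀ n, P fun i : Fin n => F i := by
  -- Kőnig's lemma on the finitely branching tree of admissible prefixes satisfying `P`.
  let T (n : ℕ) := {A : Fin n → α // (∀ i : Fin n, A i ∈ S i) ∧ P A}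
  let π {m n : ℕ} (h : m ≤ n) (A : T n) : T m :=
    ⟨A.1 ∘ Fin.castLE h, fun i => A.2.1 (Fin.castLE h i), hP h _ A.2.2⟩
  have : ∀ n, Nonempty (T n) := fun n => let ⟨A, hA⟩ := hex n; ⟨⟨A, hA⟩⟩
  have hfin : ∀ n (A : T n), {B : T (n + 1) | π (Nat.le_add_right n 1) B = A}.Finite := by
    intro n A
    refine (hS n).of_injOn (f := fun B : T (n + 1) => B.1 (Fin.last n))
      (fun B _ => B.2.1 (Fin.last n)) ?_
    intro B hB C hC hlast
    apply Subtype.ext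
    funext i
    induction i using Fin.lastCases with
    | last => exact hlast
    | cast j => exact congrFun (congrArg Subtype.val (hB.trans hC.symm)) j
  obtain ⟨f, hf⟩ := exists_seq_forall_proj_of_forall_finite π (fun _ _ => rfl)
    (fun _ _ _ _ _ _ => rfl) hfin
  have hprefix : ∀ n (i : Fin n), (f (i + 1)).1 (Fin.last i) = (f n).1 i := fun n i => by
    rw [← hf i.isLt]
    rfl
  refine ⟨fun i => (f (i + 1)).1 (Fin.last i), fun i => (f (i + 1)).2.1 (Fin.last i), fun n => ?_⟩
  simpa only [hprefix] using (f n).2.2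

theorem exists_forall_hasChain_of_finite [Preorder α] [WellQuasiOrderedLE α]
    {S : ℕ → Set α} (hS : ∀ i, (S i).Finite) (l : ℕ) :
    ∃ M, ∀ A : Fin M → α, (∀ i : Fin M, A i ∈ S i) → HasChain l A := by
  by_contra! hbad
  obtain ⟨F, -, hF⟩ := exists_seq_forall_prefix_of_forall_exists hS (fun A => ¬HasChain l A)
    (fun h _ hA hchain => hA (.of_castLE h hchain)) hbad
  obtain ⟨N, hN⟩ := exists_hasChain_of_wellQuasiOrderedLE F l
  exact hF N hN

end

theorem exists_ramsey_number_for_chains_general (d l : ℕ) (k : ℕ) :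
    ∃ M : ℕ, 0 < M ∧ ∀ A : Fin M → (Fin d → ℕ),
      (∀ i : Fin M, ∑ j, A i j = k + (i : ℕ) + 1) →
      ∃ g : Fin l → Fin M, StrictMono g ∧ Monotone (fun a => A (g a)) := by
  have hfinite (i : ℕ) : {x : Fin d → ℕ | ∑ j, x j = k + i + 1}.Finite :=
    (Finset.Nat.antidiagonalTuple d (k + i + 1)).finite_toSet.subset
      fun _ hx => Finset.Nat.mem_antidiagonalTuple.mpr hx
  obtain ⟨M, hM⟩ := exists_forall_hasChain_of_finite hfinite l
  exact ⟨M + 1, M.succ_pos, fun A hA =>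
    HasChain.of_castLE M.le_succ (hM _ fun i => hA (Fin.castLE M.le_succ i))⟩

/-- For positive integers `d`, `l` and a nonnegative integer `k`, there is a
positive integer `M` such that every sequence `A_1, …, A_M` of `d`-tuples of
nonnegative integers with `|A_i| = k + i` contains a chain
`A_{i_1} ≼ A_{i_2} ≼ ⋯ ≼ A_{i_l}` (componentwise) of length `l`. -/
theorem exists_ramsey_number_for_chains (d l : ℕ) (hd : 0 < d) (hl : 0 < l) (k : ℕ) :
    ∃ M : ℕ, 0 < M ∧ ∀ A : Fin M → (Fin d → ℕ),
      (∀ i : Fin M, ∑ j, A i j = k + (i : ℕ) + 1) →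
      ∃ g : Fin l → Fin M, StrictMono g ∧ Monotone (fun a => A (g a)) :=
  exists_ramsey_number_for_chains_general d l k
end

section
/- In the power series ring k[[x,y]] over a field k, for n ≥ 2 one has (x^{n-1}y)^{n-1} ∉ (x^n, y^n)(x^n, y^n, x^{n-1}y)^{n-2}. -/
/-!
Power series with no monomial in a lower set of exponents form an ideal, and multiplying by a
monomial `x^a` shifts that lower set by `a`. Every generator of `J = (x^n, y^n, x^{n-1}y)` is a
multiple of `x^{n-1}` or of `y^n`, so no element of `J^m` has a monomial `x^i y^j` with
`i < m(n-1)` and `j < n`; likewise no element of `(x^n, y^n) J^{n-2}` has one with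
`i < (n-2)(n-1) + n = (n-1)^2 + 1` and `j < n`. But `(x^{n-1}y)^{n-1} = x^{(n-1)^2} y^{n-1}`.
-/

open MvPowerSeries

namespace MvPowerSeries

variable {σ R : Type*} [CommSemiring R]

def idealAvoiding (s : LowerSet (σ →₀ ℕ)) : Ideal (MvPowerSeries σ R) where
  carrier := {f | ∀ e ∈ s, coeff e f = 0}
  zero_mem' _ _ := map_zero _
  add_mem' hf hg e he := by rw [map_add, hf e he, hg e he, add_zero]
  smul_mem' c f hf e he := by
    classical
    rw [smul_eq_mul, coeff_mul]
    refine Finset.sum_eq_zero fun p hp => ?_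
    have hle : p.2 ≤ e := by
      rw [← Finset.HasAntidiagonal.mem_antidiagonal.mp hp]
      exact le_add_self
    rw [hf p.2 (s.lower hle he), mul_zero]

theorem monomial_one_mul_mem_idealAvoiding {s t : LowerSet (σ →₀ ℕ)} {b : σ →₀ ℕ}
    (hst : ∀ e ∈ t, b ≤ e → e - b ∈ s) {f : MvPowerSeries σ R} (hf : f ∈ idealAvoiding s) :
    monomial b 1 * f ∈ idealAvoiding t := fun e he => by
  rw [coeff_monomial_mul]
  split_ifs with hb
  · rw [hf _ (hst e he hb), mul_zero]
  · rfl

theorem monomial_one_notMem_idealAvoiding [Nontrivial R] {s : LowerSet (σ →₀ ℕ)}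
    {e : σ →₀ ℕ} (he : e ∈ s) : monomial e (1 : R) ∉ idealAvoiding s := fun h =>
  one_ne_zero ((coeff_monomial_same e (1 : R)).symm.trans (h e he))

end MvPowerSeries

def exponentBox (d b : ℕ) : LowerSet (Fin 2 →₀ ℕ) where
  carrier := {e | e 0 < d ∧ e 1 < b}
  lower' _ _ hle he := ⟨(hle 0).trans_lt he.1, (hle 1).trans_lt he.2⟩

@[simp]
theorem mem_exponentBox {d b : ℕ} {e : Fin 2 →₀ ℕ} : e ∈ exponentBox d b ↔ e 0 < d ∧ e 1 < b :=
  Iff.rfl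

section

variable {R : Type*} [CommSemiring R]

theorem X_zero_pow_mul_mem_idealAvoiding_box {a b d : ℕ} {f : MvPowerSeries (Fin 2) R}
    (hf : f ∈ idealAvoiding (exponentBox d b)) :
    X 0 ^ a * f ∈ idealAvoiding (exponentBox (d + a) b) := by
  rw [X_pow_eq]
  refine monomial_one_mul_mem_idealAvoiding (fun e he hle => ?_) hf
  have ha : a ≤ e 0 := Finsupp.single_le_iff.mp hle
  rw [mem_exponentBox] at he ⊢
  simp only [Finsupp.tsub_apply, Finsupp.single_eq_same,
    Finsupp.single_eq_of_ne (zero_ne_one' (Fin 2)).symm]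
  omega

theorem X_one_pow_mul_mem_idealAvoiding_box (b d : ℕ) (f : MvPowerSeries (Fin 2) R) :
    X 1 ^ b * f ∈ idealAvoiding (exponentBox d b) := by
  rw [X_pow_eq]
  refine monomial_one_mul_mem_idealAvoiding (s := ⊥) (fun e he hle => ?_) (fun e he => he.elim)
  exact absurd (Finsupp.single_le_iff.mp hle) (not_le.mpr he.2)

theorem span_X_pow_pair_mul_idealAvoiding_box_le (a b d : ℕ) :
    Ideal.span {X 0 ^ a, X 1 ^ b} * idealAvoiding (exponentBox d b) ≤
      idealAvoiding (R := R) (exponentBox (d + a) b) := by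
  refine Ideal.mul_le.mpr fun r hr f hf => ?_
  obtain ⟨u, v, rfl⟩ := Ideal.mem_span_pair.mp hr
  rw [add_mul, mul_assoc, mul_assoc]
  exact add_mem (Ideal.mul_mem_left _ u (X_zero_pow_mul_mem_idealAvoiding_box hf))
    (Ideal.mul_mem_left _ v (X_one_pow_mul_mem_idealAvoiding_box b (d + a) f))

theorem span_X_pow_pair_pow_le_idealAvoiding_box (a b m : ℕ) :
    Ideal.span {X 0 ^ a, X 1 ^ b} ^ m ≤ idealAvoiding (R := R) (exponentBox (m * a) b) := by
  induction m with
  | zero => exact fun f _ e he => absurd he.1 (by simp)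
  | succ m ih =>
    rw [pow_succ', Nat.succ_mul]
    exact (Ideal.mul_mono_right ih).trans (span_X_pow_pair_mul_idealAvoiding_box_le a b _)

theorem span_X_pow_triple_le_span_pair {n : ℕ} (hn : n ≠ 0) :
    Ideal.span {(X 0 : MvPowerSeries (Fin 2) R) ^ n, X 1 ^ n, X 0 ^ (n - 1) * X 1} ≤
      Ideal.span {X 0 ^ (n - 1), X 1 ^ n} := by
  have hX0 : (X 0 : MvPowerSeries (Fin 2) R) ^ (n - 1) ∈ Ideal.span {X 0 ^ (n - 1), X 1 ^ n} :=
    Ideal.subset_span (Set.mem_insert _ _)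
  have hX1 : (X 1 : MvPowerSeries (Fin 2) R) ^ n ∈ Ideal.span {X 0 ^ (n - 1), X 1 ^ n} :=
    Ideal.subset_span (Set.mem_insert_of_mem _ rfl)
  have hX0n : (X 0 : MvPowerSeries (Fin 2) R) ^ n = X 0 ^ (n - 1) * X 0 := by
    rw [← pow_succ, Nat.sub_one_add_one hn]
  rw [Ideal.span_le, Set.insert_subset_iff, Set.insert_subset_iff, Set.singleton_subset_iff, hX0n]
  exact ⟨Ideal.mul_mem_right _ _ hX0, hX1, Ideal.mul_mem_right _ _ hX0⟩

theorem X_zero_pow_mul_X_one_pow_eq_monomial (a c : ℕ) :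
    ((X 0 : MvPowerSeries (Fin 2) R) ^ a * X 1) ^ c =
      monomial (Finsupp.single 0 (a * c) + Finsupp.single 1 c) 1 := by
  rw [mul_pow, ← pow_mul, ← pow_one (X 1 : MvPowerSeries (Fin 2) R), ← pow_mul, one_mul,
    X_pow_eq, X_pow_eq, monomial_mul_monomial, one_mul]

end

/-- In the power series ring `k[[x,y]]`, for `n ≥ 2` one has
`(x^{n-1}y)^{n-1} ∉ (x^n, y^n)·(x^n, y^n, x^{n-1}y)^{n-2}`. -/
theorem pow_not_mem_span_mul_pow (k : Type) [Field k] (n : ℕ) (hn : 2 ≤ n) :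
    ((X 0 : MvPowerSeries (Fin 2) k) ^ (n - 1) * X 1) ^ (n - 1) ∉
      Ideal.span {(X 0 : MvPowerSeries (Fin 2) k) ^ n, X 1 ^ n} *
        (Ideal.span {(X 0 : MvPowerSeries (Fin 2) k) ^ n, X 1 ^ n,
          X 0 ^ (n - 1) * X 1}) ^ (n - 2) := by
  have hle : Ideal.span {(X 0 : MvPowerSeries (Fin 2) k) ^ n, X 1 ^ n} *
      Ideal.span {X 0 ^ n, X 1 ^ n, X 0 ^ (n - 1) * X 1} ^ (n - 2) ≤
        idealAvoiding (exponentBox ((n - 2) * (n - 1) + n) n) :=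
    (Ideal.mul_mono_right ((Ideal.pow_right_mono
      (span_X_pow_triple_le_span_pair (by omega)) (n - 2)).trans
        (span_X_pow_pair_pow_le_idealAvoiding_box _ _ _))).trans
      (span_X_pow_pair_mul_idealAvoiding_box_le n n _)
  have hdeg : (n - 1) * (n - 1) < (n - 2) * (n - 1) + n := by
    obtain ⟨m, rfl⟩ := Nat.exists_eq_add_of_le' hn
    rw [show m + 2 - 1 = m + 1 by omega, show m + 2 - 2 = m by omega]
    nlinarith
  rw [X_zero_pow_mul_X_one_pow_eq_monomial]
  refine fun hmem => monomial_one_notMem_idealAvoiding ?_ (hle hmem)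
  simp only [mem_exponentBox, Finsupp.add_apply, Finsupp.single_eq_same,
    Finsupp.single_eq_of_ne (zero_ne_one' (Fin 2)),
    Finsupp.single_eq_of_ne (zero_ne_one' (Fin 2)).symm, add_zero, zero_add]
  exact ⟨hdeg, by omega⟩
end
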